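/- With Ω_K the graded algebra of simplicial forms on a simplicial complex K and d_q as defined by d_q(ω)(x_0,…,x_{n+1}) = ∑_{k=0}^n q^k ω(x_0,…,x̂_k,…,x_{n+1}) − q^n ω(x_0,…,x_n), if q is a primitive N-th root of unity (N ≥ 2) then (d_q)^N = 0. -/

import Mathlib

/-- A simplicial `n`-form on a vertex set `K`, encoded as a function of
infinite tuples depending only on `x 0, …, x n`. -/
def IsSimpForm {K : Type*} (n : ℕ) (ω : (ℕ → K) → ℂ) : Prop :=
  ∀ x y : ℕ → K, (∀ i ≤ n, x i = y i) → ω x = ω y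

/-- The `q`-differential on `n`-forms:
`d_q(ω)(x_0,…,x_{n+1}) = ∑_{k=0}^n q^k ω(x_0,…,x̂_k,…,x_{n+1}) - q^n ω(x_0,…,x_n)`. -/
noncomputable def simpFormD {K : Type*} (q : ℂ) (n : ℕ) (ω : (ℕ → K) → ℂ) :
    (ℕ → K) → ℂ :=
  fun x =>
    (∑ k ∈ Finset.range (n + 1), q ^ k * ω (fun i => if i < k then x i else x (i + 1)))
      - q ^ n * ω x

/-- Iterates of the `q`-differential, starting from degree `n`. -/
noncomputable def simpFormDIter {K : Type*} (q : ℂ) :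
    ℕ → ℕ → ((ℕ → K) → ℂ) → ((ℕ → K) → ℂ)
  | 0, _, ω => ω
  | m + 1, n, ω => simpFormD q (n + m) (simpFormDIter q m n ω)


namespace SimpDq

open Finset

variable {K : Type*}

/-- Delete index `k`. -/
def dface (k : ℕ) (x : ℕ → K) : ℕ → K := fun i => if i < k then x i else x (i + 1)

/-- Skip value `k`. -/
def shiftF (k : ℕ) : ℕ → ℕ := fun t => if t < k then t else t + 1

lemma shiftF_strictMono (k : ℕ) : StrictMono (shiftF k) := by
  intro a b hab; unfold shiftF; split_ifs <;> omega

lemma shiftF_injective (k : ℕ) : Function.Injective (shiftF k) :=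
  (shiftF_strictMono k).injective

lemma dface_apply (k : ℕ) (x : ℕ → K) (s : ℕ) : dface k x s = x (shiftF k s) := by
  by_cases h : s < k <;> simp [dface, shiftF, h]

/-- Select coordinates of `x` along the sorted elements of `S`, defaulting to `t`. -/
def selF (S : Finset ℕ) (t : ℕ) (x : ℕ → K) : ℕ → K :=
  fun i => x ((S.sort (· ≤ ·)).getD i t)

lemma sort_image (S : Finset ℕ) {f : ℕ → ℕ} (hf : StrictMono f) :
    (S.image f).sort (· ≤ ·) = (S.sort (· ≤ ·)).map f := by
  refine (fun h1 h2 h3 => List.Perm.eq_of_pairwise' (r := (· ≤ ·)) h2 h3 h1) ?_ ?_ ?_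
  · rw [← Multiset.coe_eq_coe, Finset.sort_eq,
      Finset.image_val_of_injOn (hf.injective.injOn)]
    conv_lhs => rw [← Finset.sort_eq S (· ≤ ·)]
    rw [Multiset.map_coe]
  · exact Finset.pairwise_sort _ _
  · exact List.Pairwise.map f (fun a b h => hf.le_iff_le.2 h) (Finset.pairwise_sort _ _)

lemma selF_dface (S : Finset ℕ) (M k : ℕ) (hk : k ≤ M) (x : ℕ → K) :
    selF S M (dface k x) = selF (S.image (shiftF k)) (M + 1) x := by
  funext i
  unfold selF
  rw [sort_image S (shiftF_strictMono k)]
  rcases lt_or_ge i (S.sort (· ≤ ·)).length with h | h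
  · have h2 : i < ((S.sort (· ≤ ·)).map (shiftF k)).length := by simpa using h
    rw [List.getD_eq_getElem _ _ h, List.getD_eq_getElem _ _ h2, List.getElem_map]
    exact dface_apply k x _
  · rw [List.getD_eq_default _ _ h, List.getD_eq_default _ _ (by simpa using h)]
    rw [dface_apply]
    congr 1
    unfold shiftF
    simp [Nat.not_lt.2 hk]


lemma getD_sort_mem_or (S : Finset ℕ) (t i : ℕ) :
    (S.sort (· ≤ ·)).getD i t ∈ S ∨ (S.sort (· ≤ ·)).getD i t = t := by
  rcases lt_or_ge i (S.sort (· ≤ ·)).length with h | h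
  · left
    rw [List.getD_eq_getElem _ _ h]
    refine (Finset.mem_sort (α := ℕ) (· ≤ ·)).1 ?_
    exact List.getElem_mem h
  · right
    exact List.getD_eq_default _ _ h

/-- The basic sums of which iterated differentials are composed. -/
noncomputable def Bform (q : ℂ) (n j : ℕ) (ω : (ℕ → K) → ℂ) : (ℕ → K) → ℂ :=
  fun x => ∑ S ∈ Finset.powersetCard n (Finset.range (n + j)),
    (q ^ (∑ i ∈ S, i))⁻¹ * ω (selF S (n + j) x)

lemma isSimpForm_Bform (q : ℂ) (n j : ℕ) (ω : (ℕ → K) → ℂ) :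
    IsSimpForm (n + j) (Bform q n j ω) := by
  intro x y hxy
  unfold Bform
  refine Finset.sum_congr rfl fun S hS => ?_
  rw [Finset.mem_powersetCard] at hS
  congr 1
  have : selF S (n + j) x = selF S (n + j) y := by
    funext i
    unfold selF
    apply hxy
    rcases getD_sort_mem_or S (n + j) i with h | h
    · exact le_of_lt (Finset.mem_range.1 (hS.1 h))
    · omega
  rw [this]

/-- Count of elements of `T` above `k`. -/
def cnt (k : ℕ) (T : Finset ℕ) : ℕ := (T.filter (fun t => k < t)).card

lemma sum_image_shift (S : Finset ℕ) (k : ℕ) :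
    ∑ i ∈ S.image (shiftF k), i = (∑ i ∈ S, i) + cnt k (S.image (shiftF k)) := by
  have h1 : cnt k (S.image (shiftF k)) = (S.filter (fun s => k ≤ s)).card := by
    unfold cnt
    rw [Finset.filter_image]
    rw [Finset.card_image_of_injective _ (shiftF_injective k)]
    congr 1
    ext s
    unfold shiftF
    by_cases h : s < k <;> simp [h] <;> omega
  rw [h1, Finset.sum_image (fun a _ b _ h => shiftF_injective k h)]
  have h2 : ∀ s ∈ S, shiftF k s = s + if k ≤ s then 1 else 0 := by
    intro s _; unfold shiftF; split_ifs <;> omega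
  rw [Finset.sum_congr rfl h2, Finset.sum_add_distrib]
  congr 1
  rw [Finset.card_filter]

lemma count_lt_sum (C : Finset ℕ) (f : ℕ → ℂ) :
    ∑ k ∈ C, f ((C.filter (· < k)).card) = ∑ r ∈ Finset.range C.card, f r := by
  induction C using Finset.induction_on_max with
  | empty => simp
  | insert a s ha ih =>
    have hans : a ∉ s := fun h => absurd (ha a h) (lt_irrefl a)
    rw [Finset.sum_insert hans]
    have h1 : (Finset.filter (· < a) (insert a s)) = s := by
      ext t
      simp only [Finset.mem_filter, Finset.mem_insert]
      constructor
      · rintro ⟨h | h, hlt⟩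
        · omega
        · exact h
      · intro h; exact ⟨Or.inr h, ha t h⟩
    have h2 : ∀ k ∈ s, (Finset.filter (· < k) (insert a s)) = Finset.filter (· < k) s := by
      intro k hk
      ext t
      simp only [Finset.mem_filter, Finset.mem_insert]
      have := ha k hk
      constructor
      · rintro ⟨h | h, hlt⟩
        · omega
        · exact ⟨h, hlt⟩
      · rintro ⟨h, hlt⟩; exact ⟨Or.inr h, hlt⟩
    rw [h1, Finset.card_insert_of_notMem hans, Finset.sum_range_succ]
    rw [Finset.sum_congr rfl (fun k hk => by rw [h2 k hk])]
    rw [ih]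
    ring


lemma exponent_eq {M n k : ℕ} (T : Finset ℕ)
    (hT : T ⊆ Finset.range (M + 1)) (hTc : T.card = n) (hk : k < M + 1) (hkT : k ∉ T) :
    k + cnt k T = n + (((Finset.range (M + 1)).filter (· ∉ T)).filter (· < k)).card := by
  have h1 : (T.filter (· < k)).card
      + (((Finset.range (M + 1)).filter (· ∉ T)).filter (· < k)).card = k := by
    have e1 : T.filter (· < k) = (Finset.range k).filter (· ∈ T) := by
      ext t
      simp only [Finset.mem_filter, Finset.mem_range]
      tauto
    have e2 : ((Finset.range (M + 1)).filter (· ∉ T)).filter (· < k)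
        = (Finset.range k).filter (· ∉ T) := by
      ext t
      simp only [Finset.mem_filter, Finset.mem_range]
      constructor
      · rintro ⟨⟨_, h2⟩, h3⟩; exact ⟨h3, h2⟩
      · rintro ⟨h2, h3⟩; exact ⟨⟨by omega, h3⟩, h2⟩
    rw [e1, e2]
    have := Finset.card_filter_add_card_filter_not (s := Finset.range k)
      (p := (· ∈ T))
    simpa using this
  have h2 : (T.filter (· < k)).card + cnt k T = n := by
    have e3 : T.filter (fun t => ¬ t < k) = T.filter (fun t => k < t) := by
      ext t
      simp only [Finset.mem_filter]
      constructor
      · rintro ⟨ht, h⟩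
        refine ⟨ht, ?_⟩
        rcases Nat.lt_or_ge k t with h' | h'
        · exact h'
        · exfalso; rcases Nat.eq_or_lt_of_le h' with h'' | h''
          · exact hkT (h'' ▸ ht)
          · omega
      · rintro ⟨ht, h⟩; exact ⟨ht, by omega⟩
    have := Finset.card_filter_add_card_filter_not (s := T) (p := (· < k))
    unfold cnt
    rw [← e3]
    simpa [hTc] using this
  omega

lemma master (q : ℂ) (hq0 : q ≠ 0) (n j : ℕ) (ω : (ℕ → K) → ℂ) (x : ℕ → K) :
    ∑ k ∈ Finset.range (n + j + 1), q ^ k * Bform q n j ω (dface k x)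
      = (∑ l ∈ Finset.range (j + 1), q ^ l) * (q ^ n * Bform q n (j + 1) ω x) := by
  classical
  have step1 : ∀ k ∈ Finset.range (n + j + 1),
      q ^ k * Bform q n j ω (dface k x)
        = ∑ T ∈ Finset.powersetCard n (Finset.range (n + j + 1)),
            (if k ∉ T then
              q ^ (k + cnt k T) * ((q ^ (∑ i ∈ T, i))⁻¹ * ω (selF T (n + j + 1) x))
            else 0) := by
    intro k hk
    rw [Finset.mem_range] at hk
    have hkM : k ≤ n + j := by omega
    unfold Bform
    rw [Finset.mul_sum, ← Finset.sum_filter]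
    apply Finset.sum_bij (i := fun S _ => S.image (shiftF k))
    · intro S hS
      rw [Finset.mem_powersetCard] at hS
      rw [Finset.mem_filter, Finset.mem_powersetCard]
      refine ⟨⟨?_, ?_⟩, ?_⟩
      · intro t ht
        rw [Finset.mem_image] at ht
        obtain ⟨s, hs, rfl⟩ := ht
        have := Finset.mem_range.1 (hS.1 hs)
        rw [Finset.mem_range]
        unfold shiftF
        split <;> omega
      · rw [Finset.card_image_of_injective _ (shiftF_injective k)]; exact hS.2
      · intro hmem
        rw [Finset.mem_image] at hmem
        obtain ⟨s, _, hs⟩ := hmem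
        unfold shiftF at hs
        split at hs <;> omega
    · intro S1 h1 S2 h2 h
      exact Finset.image_injective (shiftF_injective k) h
    · intro T hT
      rw [Finset.mem_filter, Finset.mem_powersetCard] at hT
      obtain ⟨⟨hTsub, hTcard⟩, hkT⟩ := hT
      have hne : ∀ t ∈ T, t ≠ k := fun t ht h => hkT (h ▸ ht)
      refine ⟨T.image (fun t => if t < k then t else t - 1), ?_, ?_⟩
      · rw [Finset.mem_powersetCard]
        constructor
        · intro s hs
          rw [Finset.mem_image] at hs
          obtain ⟨t, ht, rfl⟩ := hs
          have h1 := Finset.mem_range.1 (hTsub ht)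
          have h2 := hne t ht
          rw [Finset.mem_range]
          split <;> omega
        · rw [Finset.card_image_of_injOn, hTcard]
          intro a ha b hb h
          have := hne a ha
          have := hne b hb
          simp only at h
          split_ifs at h <;> omega
      · rw [Finset.image_image]
        rw [show ((shiftF k) ∘ fun t => if t < k then t else t - 1) = fun t =>
            shiftF k (if t < k then t else t - 1) from rfl]
        have : ∀ t ∈ T, shiftF k (if t < k then t else t - 1) = t := by
          intro t ht
          have := hne t ht
          unfold shiftF
          split_ifs <;> omega
        rw [Finset.image_congr (fun t ht => this t ht)]
        simp
    · intro S hS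
      rw [Finset.mem_powersetCard] at hS
      rw [selF_dface S (n + j) k hkM x]
      have hsum := sum_image_shift S k
      have hinv : (q ^ (∑ i ∈ S, i))⁻¹
          = q ^ (cnt k (S.image (shiftF k))) * (q ^ (∑ i ∈ S.image (shiftF k), i))⁻¹ := by
        rw [hsum, pow_add]
        field_simp
      rw [hinv, pow_add]
      ring
  rw [Finset.sum_congr rfl step1, Finset.sum_comm]
  have step2 : ∀ T ∈ Finset.powersetCard n (Finset.range (n + j + 1)),
      (∑ k ∈ Finset.range (n + j + 1), if k ∉ T then
          q ^ (k + cnt k T) * ((q ^ (∑ i ∈ T, i))⁻¹ * ω (selF T (n + j + 1) x))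
        else 0)
      = ((∑ l ∈ Finset.range (j + 1), q ^ l) * q ^ n)
          * ((q ^ (∑ i ∈ T, i))⁻¹ * ω (selF T (n + j + 1) x)) := by
    intro T hT
    rw [Finset.mem_powersetCard] at hT
    rw [← Finset.sum_filter]
    set C := (Finset.range (n + j + 1)).filter (· ∉ T) with hC
    have hcC : C.card = j + 1 := by
      have hCd : C = Finset.range (n + j + 1) \ T := (Finset.sdiff_eq_filter _ _).symm
      rw [hCd, Finset.card_sdiff_of_subset hT.1, Finset.card_range, hT.2]
      omega
    have hexp : ∀ k ∈ C, k + cnt k T = n + (C.filter (· < k)).card := by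
      intro k hk
      rw [hC, Finset.mem_filter] at hk
      exact exponent_eq T hT.1 hT.2 (Finset.mem_range.1 hk.1) hk.2
    calc (∑ k ∈ C, q ^ (k + cnt k T)
            * ((q ^ (∑ i ∈ T, i))⁻¹ * ω (selF T (n + j + 1) x)))
        = ∑ k ∈ C, (fun r => q ^ r) ((C.filter (· < k)).card)
            * (q ^ n * ((q ^ (∑ i ∈ T, i))⁻¹ * ω (selF T (n + j + 1) x))) := by
          refine Finset.sum_congr rfl fun k hk => ?_
          rw [hexp k hk, pow_add]
          ring
      _ = (∑ r ∈ Finset.range C.card, (fun r => q ^ r) r)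
            * (q ^ n * ((q ^ (∑ i ∈ T, i))⁻¹ * ω (selF T (n + j + 1) x))) := by
          rw [← Finset.sum_mul, count_lt_sum C (fun r => q ^ r)]
      _ = ((∑ l ∈ Finset.range (j + 1), q ^ l) * q ^ n)
            * ((q ^ (∑ i ∈ T, i))⁻¹ * ω (selF T (n + j + 1) x)) := by
          rw [hcC]
          ring
  rw [Finset.sum_congr rfl step2, ← Finset.mul_sum]
  have hBe : Bform q n (j + 1) ω x
      = ∑ T ∈ Finset.powersetCard n (Finset.range (n + j + 1)),
          (q ^ (∑ i ∈ T, i))⁻¹ * ω (selF T (n + j + 1) x) := by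
    unfold Bform
    rw [show n + (j + 1) = n + j + 1 from rfl]
  rw [hBe]
  ring


lemma simpFormD_eq (q : ℂ) (m : ℕ) (F : (ℕ → K) → ℂ) (x : ℕ → K) :
    simpFormD q m F x
      = (∑ k ∈ Finset.range (m + 1), q ^ k * F (dface k x)) - q ^ m * F x := rfl

lemma Bform_zero (q : ℂ) (n : ℕ) (ω : (ℕ → K) → ℂ) (hω : IsSimpForm n ω) (y : ℕ → K) :
    Bform q n 0 ω y = (q ^ (∑ i ∈ Finset.range n, i))⁻¹ * ω y := by
  unfold Bform
  have h := Finset.powersetCard_self (Finset.range n)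
  rw [Finset.card_range] at h
  rw [show n + 0 = n from rfl, h, Finset.sum_singleton]
  congr 1
  apply hω
  intro i hi
  unfold selF
  rw [Finset.sort_range]
  rcases Nat.lt_or_ge i n with h' | h'
  · rw [List.getD_eq_getElem _ _ (by simpa using h')]
    congr 1
    simp
  · rw [List.getD_eq_default _ _ (by simpa using h')]
    congr 1
    omega

lemma iter_formula (q : ℂ) (hq0 : q ≠ 0) (n : ℕ) (ω : (ℕ → K) → ℂ)
    (hω : IsSimpForm n ω) (m : ℕ) :
    ∀ x : ℕ → K, simpFormDIter q (m + 1) n ω x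
      = (∏ i ∈ Finset.range (m + 1), ∑ l ∈ Finset.range (i + 1), q ^ l)
        * q ^ (n * (m + 1) + ∑ i ∈ Finset.range n, i)
        * (Bform q n (m + 1) ω x - Bform q n m ω x) := by
  induction m with
  | zero =>
    intro x
    have hstep : simpFormDIter q 1 n ω x = simpFormD q (n + 0) ω x := rfl
    rw [hstep, simpFormD_eq]
    have hm := master q hq0 n 0 ω x
    simp only [zero_add, Finset.sum_range_one, pow_zero, one_mul] at hm
    have hB0 : ∀ y : ℕ → K, Bform q n 0 ω y
        = (q ^ (∑ i ∈ Finset.range n, i))⁻¹ * ω y := Bform_zero q n ω hω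
    have key : ∑ k ∈ Finset.range (n + 0 + 1), q ^ k * ω (dface k x)
        = q ^ (∑ i ∈ Finset.range n, i) * (q ^ n * Bform q n 1 ω x) := by
      rw [← hm, Finset.mul_sum]
      refine Finset.sum_congr rfl fun k _ => ?_
      rw [hB0]
      field_simp
      try ring
    rw [key, hB0]
    simp only [zero_add, Finset.prod_range_one, Finset.sum_range_one, pow_zero, one_mul]
    have he : n * 1 + ∑ i ∈ Finset.range n, i
        = n + ∑ i ∈ Finset.range n, i := by ring
    rw [he, pow_add]
    field_simp
    ring
  | succ m ih =>
    intro x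
    have hstep : simpFormDIter q (m + 1 + 1) n ω x
        = simpFormD q (n + (m + 1)) (simpFormDIter q (m + 1) n ω) x := rfl
    rw [hstep, simpFormD_eq]
    have hsum1 : ∑ k ∈ Finset.range (n + (m + 1) + 1),
        q ^ k * simpFormDIter q (m + 1) n ω (dface k x)
        = (∏ i ∈ Finset.range (m + 1), ∑ l ∈ Finset.range (i + 1), q ^ l)
          * q ^ (n * (m + 1) + ∑ i ∈ Finset.range n, i)
          * ((∑ k ∈ Finset.range (n + (m + 1) + 1),
                q ^ k * Bform q n (m + 1) ω (dface k x))
            - ∑ k ∈ Finset.range (n + (m + 1) + 1),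
                q ^ k * Bform q n m ω (dface k x)) := by
      rw [Finset.sum_congr rfl (fun k _ => by rw [ih (dface k x)])]
      rw [← Finset.sum_sub_distrib, Finset.mul_sum]
      refine Finset.sum_congr rfl fun k _ => ?_
      ring
    rw [hsum1, ih x]
    have h1 : ∑ k ∈ Finset.range (n + (m + 1) + 1),
        q ^ k * Bform q n (m + 1) ω (dface k x)
        = (∑ l ∈ Finset.range (m + 1 + 1), q ^ l)
          * (q ^ n * Bform q n (m + 1 + 1) ω x) := master q hq0 n (m + 1) ω x
    have h3 : Bform q n m ω (dface (n + (m + 1)) x) = Bform q n m ω x := by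
      apply isSimpForm_Bform q n m ω
      intro i hi
      unfold dface
      rw [if_pos (by omega)]
    have h2 : ∑ k ∈ Finset.range (n + (m + 1) + 1),
        q ^ k * Bform q n m ω (dface k x)
        = (∑ l ∈ Finset.range (m + 1), q ^ l) * (q ^ n * Bform q n (m + 1) ω x)
          + q ^ (n + (m + 1)) * Bform q n m ω x := by
      rw [Finset.sum_range_succ, h3]
      congr 1
      exact master q hq0 n m ω x
    rw [h1, h2]
    have hprod : (∏ i ∈ Finset.range (m + 1 + 1), ∑ l ∈ Finset.range (i + 1), q ^ l)
        = (∏ i ∈ Finset.range (m + 1), ∑ l ∈ Finset.range (i + 1), q ^ l)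
          * ((∑ l ∈ Finset.range (m + 1), q ^ l) + q ^ (m + 1)) := by
      rw [Finset.prod_range_succ, Finset.sum_range_succ]
    rw [hprod]
    have hsum2 : (∑ l ∈ Finset.range (m + 1 + 1), q ^ l)
        = (∑ l ∈ Finset.range (m + 1), q ^ l) + q ^ (m + 1) := Finset.sum_range_succ _ _
    rw [hsum2]
    have hpow1 : q ^ (n * (m + 1 + 1) + ∑ i ∈ Finset.range n, i)
        = q ^ (n * (m + 1) + ∑ i ∈ Finset.range n, i) * q ^ n := by
      rw [← pow_add]
      congr 1
      ring
    rw [hpow1]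
    have hpow2 : (q : ℂ) ^ (n + (m + 1))
        = q ^ n * q ^ (m + 1) := by rw [← pow_add]
    rw [hpow2]
    ring

end SimpDq

/-- for a simplicial complex `(K, S)` and `q` a primitive `N`-th
root of unity (`N ≥ 2`), the `q`-differential on simplicial forms satisfies
`(d_q)^N = 0`, as functions on ordered simplices. -/
theorem simplicial_forms_dq_pow_N_eq_zero
    (K : Type*) [DecidableEq K] (S : Set (Finset K))
    (hSne : ∀ X ∈ S, X.Nonempty)
    (hS : ∀ X ∈ S, ∀ Y ⊆ X, Y.Nonempty → Y ∈ S)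
    (N : ℕ) (hN : 2 ≤ N) (q : ℂ) (hq : IsPrimitiveRoot q N)
    (n : ℕ) (ω : (ℕ → K) → ℂ) (hω : IsSimpForm n ω) :
    ∀ x : ℕ → K, (Finset.image (fun i : Fin (n + N + 1) => x i) Finset.univ) ∈ S →
      simpFormDIter q N n ω x = 0 := by
  intro x _
  have hq0 : q ≠ 0 := hq.ne_zero (by omega)
  obtain ⟨M, rfl⟩ : ∃ M, N = M + 1 := ⟨N - 1, by omega⟩
  rw [SimpDq.iter_formula q hq0 n ω hω M x]
  have hz : (∑ l ∈ Finset.range (M + 1), q ^ l) = 0 :=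
    hq.geom_sum_eq_zero (by omega)
  rw [Finset.prod_eq_zero (Finset.self_mem_range_succ M) hz, zero_mul, zero_mul]
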